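/- arXiv:2401.16540 — 2 statements merged into one kernel-verified Lean document; each statement's English description precedes it below -/
import Mathlib

section
/- Let d ≥ 2 and n ≥ d + 1. Every d-disjunctive t×n binary code C is a strongly d-separable matrix: for every D0 ⊆ {1,…,n} with |D0| = d, the intersection of all sets D' ⊆ {1,…,n} whose Boolean sum of columns equals the Boolean sum of the columns indexed by D0 is exactly D0. -/
open Finset

/-- The Boolean sum (componentwise OR) of the columns of `C` indexed by `S`. -/
noncomputable def boolSum {t n : ℕ} (C : Fin t → Fin n → Bool) (S : Finset (Fin n)) : Fin t → Bool :=
  fun r => S.sup fun i => C r i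

/-- `covers x y` : the vector `x` covers the vector `y`, i.e. `x ∨ y = x`. -/
def covers {t : ℕ} (x y : Fin t → Bool) : Prop := ∀ r, y r = true → x r = true

instance {t : ℕ} (x y : Fin t → Bool) : Decidable (covers x y) := by
  unfold covers; infer_instance

/-- `C` is `d`-disjunctive: the Boolean sum of any `d` columns covers no other column. -/
def Disjunctive {t n : ℕ} (d : ℕ) (C : Fin t → Fin n → Bool) : Prop :=
  ∀ D : Finset (Fin n), D.card = d → ∀ j ∉ D, ¬ covers (boolSum C D) (fun i => C i j)

/-- `C` is a strongly `d`-separable matrix. -/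
def SSM {t n : ℕ} (d : ℕ) (C : Fin t → Fin n → Bool) : Prop :=
  ∀ D0 : Finset (Fin n), D0.card = d →
    {i : Fin n | ∀ D' : Finset (Fin n), boolSum C D' = boolSum C D0 → i ∈ D'} = ↑D0

/-- `C` is a `(=d)`-union-free code. -/
def UnionFreeEq {t n : ℕ} (d : ℕ) (C : Fin t → Fin n → Bool) : Prop :=
  ∀ D1 D2 : Finset (Fin n), D1.card = d → D2.card = d → D1 ≠ D2 →
    boolSum C D1 ≠ boolSum C D2

/-- `C` is a `(≤d)`-union-free code. -/
def UnionFreeLe {t n : ℕ} (d : ℕ) (C : Fin t → Fin n → Bool) : Prop :=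
  ∀ D1 D2 : Finset (Fin n), D1.card ≤ d → D2.card ≤ d → D1 ≠ D2 →
    boolSum C D1 ≠ boolSum C D2

/-- The number of columns of `C` covered by the vector `r`. -/
def coveredCount {t n : ℕ} (C : Fin t → Fin n → Bool) (r : Fin t → Bool) : ℕ :=
  (Finset.univ.filter fun j : Fin n => covers r (fun i => C i j)).card

/-- `C` is a `(=d)`-union-free code with fast decoding. -/
def UFFDEq {t n : ℕ} (d : ℕ) (C : Fin t → Fin n → Bool) : Prop :=
  UnionFreeEq d C ∧
    ∀ D : Finset (Fin n), D.card = d →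
      (coveredCount C (boolSum C D) : ℝ) ≤ (n : ℝ) ^ ((1 : ℝ) / d)

/-- `C` is a `(≤d)`-union-free code with fast decoding. -/
def UFFDLe {t n : ℕ} (d : ℕ) (C : Fin t → Fin n → Bool) : Prop :=
  UnionFreeLe d C ∧
    ∀ D : Finset (Fin n), D.card ≤ d →
      (coveredCount C (boolSum C D) : ℝ) ≤ (n : ℝ) ^ ((1 : ℝ) / d)

/-! If the Boolean sums of `D` and `D0` agree, disjunctiveness at `D0` forces `D ⊆ D0`. Should `D`
miss some `i ∈ D0`, pad `D` to a set of `d` columns avoiding `i` (possible since `n ≥ d + 1`); its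
Boolean sum still covers column `i`, contradicting disjunctiveness. -/

section Columns

variable {t n : ℕ} (C : Fin t → Fin n → Bool)

lemma boolSum_singleton (j : Fin n) : boolSum C {j} = fun r => C r j := by
  ext r
  simp [boolSum]

lemma covers_boolSum_of_subset {S T : Finset (Fin n)} (h : S ⊆ T) :
    covers (boolSum C T) (boolSum C S) :=
  fun _ hr => top_unique (hr.ge.trans (sup_mono h))

lemma covers_boolSum_of_mem {S : Finset (Fin n)} {j : Fin n} (hj : j ∈ S) :
    covers (boolSum C S) (fun r => C r j) :=
  boolSum_singleton C j ▸ covers_boolSum_of_subset C (singleton_subset_iff.mpr hj)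

end Columns

namespace Disjunctive

variable {t n d : ℕ} {C : Fin t → Fin n → Bool}

lemma subset_of_covers (hC : Disjunctive d C) {D0 D : Finset (Fin n)} (hD0 : D0.card = d)
    (hcov : covers (boolSum C D0) (boolSum C D)) : D ⊆ D0 := by
  intro j hj
  by_contra hjD0
  exact hC D0 hD0 j hjD0 fun r hr => hcov r (covers_boolSum_of_mem C hj r hr)

lemma not_covers_of_card_le (hC : Disjunctive d C) (hn : d + 1 ≤ n) {D : Finset (Fin n)}
    (hD : D.card ≤ d) {i : Fin n} (hi : i ∉ D) : ¬ covers (boolSum C D) (fun r => C r i) := by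
  have hDi : D ⊆ univ.erase i := fun j hj => mem_erase.mpr ⟨ne_of_mem_of_not_mem hj hi, mem_univ j⟩
  have hd : d ≤ (univ.erase i).card := by
    rw [card_erase_of_mem (mem_univ i), card_univ, Fintype.card_fin]
    omega
  obtain ⟨E, hDE, hEi, hE⟩ := exists_subsuperset_card_eq hDi hD hd
  exact fun hcov => hC E hE i (fun hiE => notMem_erase i univ (hEi hiE))
    fun r hr => covers_boolSum_of_subset C hDE r (hcov r hr)

end Disjunctive

theorem disjunctive_isSSM_general {t n d : ℕ} (hn : d + 1 ≤ n)
    (C : Fin t → Fin n → Bool) (hC : Disjunctive d C) : SSM d C := by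
  intro D0 hD0
  ext i
  refine ⟨fun h => h D0 rfl, fun hi D hsum => ?_⟩
  have hD : D ⊆ D0 := hC.subset_of_covers hD0 (hsum ▸ fun _ h => h)
  by_contra hiD
  exact hC.not_covers_of_card_le hn (hD0 ▸ card_le_card hD) hiD
    (hsum ▸ covers_boolSum_of_mem C (mem_coe.mp hi))

/-- Every `d`-disjunctive code is a strongly `d`-separable matrix. -/
theorem disjunctive_isSSM {t n d : ℕ} (hd : 2 ≤ d) (hn : d + 1 ≤ n)
    (C : Fin t → Fin n → Bool) (hC : Disjunctive d C) : SSM d C :=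
  disjunctive_isSSM_general hn C hC
end

section
/- Let d ≥ 2 and n ≥ d + 1. Every strongly d-separable t×n binary matrix C is a (≤d)-union-free code: for any two distinct sets D1, D2 ⊆ {1,…,n} with |D1| ≤ d and |D2| ≤ d, the Boolean sums ∨_{i∈D1} c_i and ∨_{i∈D2} c_i are distinct. -/
open Finset

lemma boolSum_true_iff {t n : ℕ} (C : Fin t → Fin n → Bool) (D : Finset (Fin n))
    (r : Fin t) : boolSum C D r = true ↔ ∃ j ∈ D, C r j = true := by
  constructor
  · intro h
    by_contra hc
    push_neg at hc
    have hb : D.sup (fun j => C r j) = ⊥ :=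
      (Finset.sup_eq_bot_iff _ _).mpr (fun b hb => by simpa using hc b hb)
    simp only [boolSum] at h
    simp [hb] at h
  · rintro ⟨j, hj, hrj⟩
    have h := Finset.le_sup (f := fun j => C r j) hj
    simp only [hrj] at h
    exact le_antisymm le_top h

/-- The key contradiction: two sets of size ≤ d with equal Boolean sums cannot
differ by an element of the first. -/
lemma SSM_key {t n d : ℕ} (hd : 2 ≤ d) (hn : d + 1 ≤ n)
    (C : Fin t → Fin n → Bool) (hC : SSM d C)
    (D1 D2 : Finset (Fin n)) (h1 : D1.card ≤ d) (h2 : D2.card ≤ d)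
    (hsum : boolSum C D1 = boolSum C D2) (i : Fin n) (hi1 : i ∈ D1) (hi2 : i ∉ D2) :
    False := by
  -- column i is covered by boolSum C D2
  have hcov : ∀ r, C r i = true → boolSum C D2 r = true := by
    intro r hr
    have h1' : boolSum C D1 r = true := (boolSum_true_iff C D1 r).mpr ⟨i, hi1, hr⟩
    rw [← hsum]; exact h1'
  rcases lt_or_eq_of_le h2 with hlt | heq
  · -- |D2| < d : extend D2 to E of size d-1 avoiding i
    have hsub : D2 ⊆ Finset.univ.erase i := by
      intro j hj
      exact Finset.mem_erase.mpr ⟨fun h => hi2 (h ▸ hj), Finset.mem_univ j⟩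
    have hcarderase : d - 1 ≤ (Finset.univ.erase i).card := by
      rw [Finset.card_erase_of_mem (Finset.mem_univ i), Finset.card_univ, Fintype.card_fin]
      omega
    obtain ⟨E, hDE, hEsub, hEcard⟩ :=
      Finset.exists_subsuperset_card_eq hsub (by omega) hcarderase
    have hiE : i ∉ E := fun h => (Finset.mem_erase.mp (hEsub h)).1 rfl
    have hcovE : ∀ r, C r i = true → boolSum C E r = true := by
      intro r hr
      obtain ⟨j, hj, hrj⟩ := (boolSum_true_iff C D2 r).mp (hcov r hr)
      exact (boolSum_true_iff C E r).mpr ⟨j, hDE hj, hrj⟩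
    have hcard : (insert i E).card = d := by
      rw [Finset.card_insert_of_notMem hiE, hEcard]; omega
    have hsame : boolSum C E = boolSum C (insert i E) := by
      funext r
      show E.sup (fun j => C r j) = (insert i E).sup (fun j => C r j)
      rw [Finset.sup_insert]
      cases hir : C r i with
      | false => simp
      | true =>
        have := hcovE r hir
        simp only [boolSum] at this
        simp [this]
    have := hC (insert i E) hcard
    have hiIn : i ∈ ({j : Fin n | ∀ D' : Finset (Fin n),
        boolSum C D' = boolSum C (insert i E) → j ∈ D'} : Set (Fin n)) := by
      rw [this]
      exact_mod_cast Finset.mem_insert_self i E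
    exact hiE (hiIn E hsame)
  · -- |D2| = d : SSM forces D2 ⊆ D1, contradiction with cardinalities
    have hset := hC D2 heq
    have hD21 : D2 ⊆ D1 := by
      intro j hj
      have hjIn : j ∈ ({k : Fin n | ∀ D' : Finset (Fin n),
          boolSum C D' = boolSum C D2 → k ∈ D'} : Set (Fin n)) := by
        rw [hset]; exact_mod_cast hj
      exact hjIn D1 hsum
    have : D2 ⊂ D1 := ⟨hD21, fun h => hi2 (h hi1)⟩
    have := Finset.card_lt_card this
    omega

/-- Every strongly `d`-separable matrix is a `(≤d)`-union-free code. -/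
theorem SSM_isUnionFreeLe {t n d : ℕ} (hd : 2 ≤ d) (hn : d + 1 ≤ n)
    (C : Fin t → Fin n → Bool) (hC : SSM d C) : UnionFreeLe d C := by
  intro D1 D2 h1 h2 hne hsum
  rcases Finset.not_subset.mp (fun h => hne (Finset.Subset.antisymm h (by
      by_contra hc
      obtain ⟨i, hi2, hi1⟩ := Finset.not_subset.mp hc
      exact SSM_key hd hn C hC D2 D1 h2 h1 hsum.symm i hi2 hi1))) with ⟨i, hi1, hi2⟩
  exact SSM_key hd hn C hC D1 D2 h1 h2 hsum i hi1 hi2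
end
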